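/- Let p be an odd prime, let χ be an odd multiplicative character modulo p, let n ≥ 1, let M ∈ M_n(ZMod p) be an arbitrary matrix, let R ∈ M_n(ZMod p) be symmetric, and let c ∈ ZMod p. Then Σ_{t ∈ (ZMod p)ⁿ} χ(det(M')) · e_p(-c · (ᵀt R t)) = 0, where M' denotes the matrix obtained from M by replacing its last column with the vector t. -/

import Mathlib

open Matrix

/-- The additive character `e_p(x) = exp(2πi x̃ / p)` on `ZMod p`. -/
noncomputable def eZMod (p : ℕ) (x : ZMod p) : ℂ :=
  Complex.exp (2 * Real.pi * Complex.I * (x.val : ℂ) / p)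

/-! Negating the last column negates the determinant and fixes the quadratic form, so for odd `χ`
the summand is an odd function of `t` and the sum cancels in pairs `t, -t`. -/

namespace Matrix

variable {n R : Type*} [Fintype n]

theorem odd_mulChar_det_updateCol [DecidableEq n] [CommRing R] {S : Type*} [CommRing S]
    (χ : MulChar R S) (hχ : χ (-1) = -1) (M : Matrix n n R) (j : n) :
    Function.Odd fun t => χ (M.updateCol j t).det := fun t => by
  dsimp only
  rw [← neg_one_smul R t, det_updateCol_smul, map_mul, hχ, neg_one_mul]

theorem even_dotProduct_mulVec_self [NonUnitalNonAssocRing R] (A : Matrix n n R) :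
    Function.Even fun t : n → R => t ⬝ᵥ A *ᵥ t := fun t => by
  simp only [mulVec_neg, neg_dotProduct, dotProduct_neg, neg_neg]

end Matrix

/-- For an odd prime `p`, an odd multiplicative character `χ` mod `p`, any matrix `M`,
a symmetric matrix `R` and a scalar `c`, the sum over the last column `t` of
`χ(det M') e_p(-c ᵀt R t)` vanishes, where `M'` is `M` with last column replaced by `t`. -/
theorem sum_det_updateColumn_oddChar_eq_zero (p : ℕ) [Fact p.Prime]
    (χ : MulChar (ZMod p) ℂ) (hχ : χ (-1) = -1) (n : ℕ) (hn : 1 ≤ n)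
    (M R : Matrix (Fin n) (Fin n) (ZMod p)) (c : ZMod p) :
    ∑ t : Fin n → ZMod p,
      χ ((M.updateCol ⟨n - 1, by omega⟩ t).det) *
        eZMod p (-c * (t ⬝ᵥ R.mulVec t)) = 0 :=
  ((odd_mulChar_det_updateCol χ hχ M _).mul_even
    ((even_dotProduct_mulVec_self R).left_comp fun q => eZMod p (-c * q))).sum_eq_zero
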